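/- arXiv:2211.08010 — 2 statements merged into one kernel-verified Lean document; each statement's English description precedes it below -/
import Mathlib

section
/- For all μ₀, w ∈ ℝⁿ and all σ₀ > 0, σ > 0, letting σ̂² = 1/(1/σ₀² + 1/σ²) and μ̂ = σ̂²·(μ₀/σ₀² + w/σ²), the Kullback–Leibler divergence of the prior from the posterior equals the log marginal likelihood minus the expected log-likelihood under the prior: ∫_{ℝⁿ} g(θ; μ₀, σ₀²)·log( g(θ; μ₀, σ₀²) / g(θ; μ̂, σ̂²) ) dθ = log g(w; μ₀, σ₀² + σ²) − ∫_{ℝⁿ} g(θ; μ₀, σ₀²)·log g(w; θ, σ²) dθ, where all integrals are with respect to Lebesgue measure on ℝⁿ (Proposition 4, Gaussian case). -/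
open MeasureTheory

/-- Density of the isotropic Gaussian `N(μ, s·I)` on `ℝⁿ` (per-coordinate variance `s`). -/
noncomputable def gaussDensity (n : ℕ) (μ : EuclideanSpace ℝ (Fin n)) (s : ℝ)
    (x : EuclideanSpace ℝ (Fin n)) : ℝ :=
  (2 * Real.pi * s) ^ (-(n : ℝ) / 2) * Real.exp (-‖x - μ‖ ^ 2 / (2 * s))

open Real

lemma gaussDensity_pos {n : ℕ} (μ : EuclideanSpace ℝ (Fin n)) {s : ℝ} (hs : 0 < s)
    (x : EuclideanSpace ℝ (Fin n)) : 0 < gaussDensity n μ s x := by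
  unfold gaussDensity
  have h2 : 0 < 2 * Real.pi * s := by positivity
  positivity

lemma gaussDensity_eq {n : ℕ} (μ : EuclideanSpace ℝ (Fin n)) (s : ℝ)
    (x : EuclideanSpace ℝ (Fin n)) :
    gaussDensity n μ s x = (2 * π * s) ^ (-(n : ℝ) / 2) * rexp (-(1 / (2 * s)) * ‖x - μ‖ ^ 2) := by
  unfold gaussDensity
  congr 1
  · congr 1
    ring

lemma integrable_rexp_neg_mul_sq_norm' {n : ℕ} {b : ℝ} (hb : 0 < b) :
    Integrable (fun v : EuclideanSpace ℝ (Fin n) => rexp (-b * ‖v‖ ^ 2)) := by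
  have h := (GaussianFourier.integrable_cexp_neg_mul_sq_norm_add
    (V := EuclideanSpace ℝ (Fin n)) (b := (b : ℂ)) (by simpa using hb) 0 0).norm
  convert h using 2 with v
  rw [Complex.norm_exp]
  norm_num
  left; norm_cast

lemma integrable_gaussDensity {n : ℕ} (μ : EuclideanSpace ℝ (Fin n)) {s : ℝ} (hs : 0 < s) :
    Integrable (gaussDensity n μ s) := by
  have hb : 0 < 1 / (2 * s) := by positivity
  have h := ((integrable_rexp_neg_mul_sq_norm' (n := n) hb).comp_sub_right μ).const_mul
    ((2 * Real.pi * s) ^ (-(n : ℝ) / 2))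
  convert h using 2 with x
  rw [gaussDensity_eq]

lemma integral_gaussDensity {n : ℕ} (μ : EuclideanSpace ℝ (Fin n)) {s : ℝ} (hs : 0 < s) :
    ∫ x, gaussDensity n μ s x = 1 := by
  have hb : 0 < 1 / (2 * s) := by positivity
  have h2 : (0:ℝ) < 2 * Real.pi * s := by positivity
  simp only [gaussDensity_eq]
  rw [MeasureTheory.integral_const_mul]
  have : ∫ x : EuclideanSpace ℝ (Fin n), rexp (-(1/(2*s)) * ‖x - μ‖ ^ 2)
      = ∫ x : EuclideanSpace ℝ (Fin n), rexp (-(1/(2*s)) * ‖x‖ ^ 2) :=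
    integral_sub_right_eq_self (fun x => rexp (-(1/(2*s)) * ‖x‖ ^ 2)) μ
  rw [this, GaussianFourier.integral_rexp_neg_mul_sq_norm hb]
  rw [finrank_euclideanSpace_fin]
  have : π / (1 / (2 * s)) = 2 * π * s := by field_simp
  rw [this, ← Real.rpow_add h2, neg_div, neg_add_cancel, Real.rpow_zero]

lemma integrable_sq_mul_gauss {n : ℕ} {b : ℝ} (hb : 0 < b) (p q : EuclideanSpace ℝ (Fin n)) :
    Integrable (fun θ : EuclideanSpace ℝ (Fin n) =>
      ‖p - θ‖ ^ 2 * rexp (-b * ‖θ - q‖ ^ 2)) := by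
  have hI : Integrable (fun θ : EuclideanSpace ℝ (Fin n) => rexp (-(b/2) * ‖θ - q‖ ^ 2)) :=
    (integrable_rexp_neg_mul_sq_norm' (by positivity)).comp_sub_right q
  refine (hI.const_mul (2 * ‖p - q‖ ^ 2 + 4 / b)).mono' ?_ ?_
  · apply Continuous.aestronglyMeasurable
    fun_prop
  · filter_upwards with θ
    set t := ‖θ - q‖ ^ 2 with ht
    have ht0 : 0 ≤ t := by positivity
    set r := rexp (-(b/2) * t) with hr
    have hr0 : 0 < r := Real.exp_pos _
    have hr1 : r ≤ 1 := by
      rw [hr, ← Real.exp_zero]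
      apply Real.exp_le_exp.mpr
      nlinarith
    have htri : ‖p - θ‖ ≤ ‖p - q‖ + ‖θ - q‖ := by
      have h := norm_sub_le (p - q) (θ - q)
      rwa [sub_sub_sub_cancel_right] at h
    have hA : ‖p - θ‖ ^ 2 ≤ 2 * ‖p - q‖ ^ 2 + 2 * t := by
      have h1 : ‖θ - q‖ ^ 2 = t := rfl
      have h2 : ‖p - θ‖ ^ 2 ≤ (‖p - q‖ + ‖θ - q‖) ^ 2 :=
        pow_le_pow_left₀ (norm_nonneg (p - θ)) htri 2
      nlinarith [sq_nonneg (‖p - q‖ - ‖θ - q‖)]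
    have htr : t * r ≤ 2 / b := by
      have h1 : (b/2) * t + 1 ≤ rexp ((b/2) * t) := Real.add_one_le_exp _
      have h2 : r * rexp ((b/2) * t) = 1 := by
        rw [hr, ← Real.exp_add, neg_mul, neg_add_cancel, Real.exp_zero]
      have h3 : 0 < rexp ((b/2) * t) := Real.exp_pos _
      -- (b/2) t r ≤ r * exp((b/2)t) = 1
      have h4 : (b/2) * t * r ≤ 1 := by
        calc (b/2) * t * r ≤ rexp ((b/2)*t) * r := by nlinarith
          _ = 1 := by rw [mul_comm]; exact h2
      rw [div_eq_mul_inv]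
      rw [show (2:ℝ) * b⁻¹ = (2/b) from by rw [div_eq_mul_inv]]
      rw [le_div_iff₀ hb]
      nlinarith
    have hE : rexp (-b * t) = r * r := by
      rw [hr, ← Real.exp_add]; congr 1; ring
    rw [Real.norm_eq_abs, abs_of_nonneg (by positivity)]
    rw [hE]
    calc ‖p - θ‖ ^ 2 * (r * r) ≤ (2 * ‖p - q‖ ^ 2 + 2 * t) * (r * r) := by nlinarith
      _ = 2 * ‖p - q‖ ^ 2 * (r * r) + 2 * ((t * r) * r) := by ring
      _ ≤ 2 * ‖p - q‖ ^ 2 * (1 * r) + 2 * ((2 / b) * r) := by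
          gcongr <;> positivity
      _ = (2 * ‖p - q‖ ^ 2 + 4 / b) * r := by ring

lemma gauss_bayes (n : ℕ)
    (μ₀ w : EuclideanSpace ℝ (Fin n)) (σ₀ σ : ℝ) (hσ₀ : 0 < σ₀) (hσ : 0 < σ)
    (shat : ℝ) (hshat : shat = 1 / (1 / σ₀ ^ 2 + 1 / σ ^ 2))
    (μhat : EuclideanSpace ℝ (Fin n))
    (hμhat : μhat = shat • ((1 / σ₀ ^ 2) • μ₀ + (1 / σ ^ 2) • w))
    (θ : EuclideanSpace ℝ (Fin n)) :
    gaussDensity n μ₀ (σ₀ ^ 2) θ * gaussDensity n θ (σ ^ 2) w =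
      gaussDensity n μ₀ (σ₀ ^ 2 + σ ^ 2) w * gaussDensity n μhat shat θ := by
  have hσ₀2 : (σ₀:ℝ) ^ 2 ≠ 0 := by positivity
  have hσ2 : (σ:ℝ) ^ 2 ≠ 0 := by positivity
  have hsum : σ₀ ^ 2 + σ ^ 2 ≠ 0 := by positivity
  have hs : shat = σ₀ ^ 2 * σ ^ 2 / (σ₀ ^ 2 + σ ^ 2) := by
    rw [hshat]; field_simp; ring
  have hshat_pos : 0 < shat := by rw [hs]; positivity
  have hc : (2 * π * σ₀ ^ 2) ^ (-(n:ℝ) / 2) * (2 * π * σ ^ 2) ^ (-(n:ℝ) / 2) =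
      (2 * π * (σ₀ ^ 2 + σ ^ 2)) ^ (-(n:ℝ) / 2) * (2 * π * shat) ^ (-(n:ℝ) / 2) := by
    rw [← Real.mul_rpow (by positivity) (by positivity),
        ← Real.mul_rpow (by positivity) (by positivity)]
    congr 1
    rw [hs]; field_simp
  have he : rexp (-‖θ - μ₀‖ ^ 2 / (2 * σ₀ ^ 2)) * rexp (-‖w - θ‖ ^ 2 / (2 * σ ^ 2)) =
      rexp (-‖w - μ₀‖ ^ 2 / (2 * (σ₀ ^ 2 + σ ^ 2))) * rexp (-‖θ - μhat‖ ^ 2 / (2 * shat)) := by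
    rw [← Real.exp_add, ← Real.exp_add]
    congr 1
    rw [hμhat, hs]
    simp only [norm_sub_sq_real, ← real_inner_self_eq_norm_sq, inner_sub_left,
      inner_sub_right, inner_add_left, inner_add_right, real_inner_smul_left,
      real_inner_smul_right]
    rw [real_inner_comm μ₀ θ, real_inner_comm w θ, real_inner_comm w μ₀]
    field_simp
    ring
  unfold gaussDensity
  calc (2 * π * σ₀ ^ 2) ^ (-(n:ℝ) / 2) * rexp (-‖θ - μ₀‖ ^ 2 / (2 * σ₀ ^ 2)) *
        ((2 * π * σ ^ 2) ^ (-(n:ℝ) / 2) * rexp (-‖w - θ‖ ^ 2 / (2 * σ ^ 2)))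
      = ((2 * π * σ₀ ^ 2) ^ (-(n:ℝ) / 2) * (2 * π * σ ^ 2) ^ (-(n:ℝ) / 2)) *
        (rexp (-‖θ - μ₀‖ ^ 2 / (2 * σ₀ ^ 2)) * rexp (-‖w - θ‖ ^ 2 / (2 * σ ^ 2))) := by ring
    _ = ((2 * π * (σ₀ ^ 2 + σ ^ 2)) ^ (-(n:ℝ) / 2) * (2 * π * shat) ^ (-(n:ℝ) / 2)) *
        (rexp (-‖w - μ₀‖ ^ 2 / (2 * (σ₀ ^ 2 + σ ^ 2))) *
          rexp (-‖θ - μhat‖ ^ 2 / (2 * shat))) := by rw [hc, he]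
    _ = _ := by ring

/-- Proposition 4, Gaussian case: the KL divergence of the Gaussian prior from the Gaussian
posterior equals the log marginal likelihood minus the expected log-likelihood under the
prior. -/
theorem kl_gauss_prior_posterior
    (n : ℕ) (hn : 1 ≤ n)
    (μ₀ w : EuclideanSpace ℝ (Fin n)) (σ₀ σ : ℝ) (hσ₀ : 0 < σ₀) (hσ : 0 < σ)
    (shat : ℝ) (hshat : shat = 1 / (1 / σ₀ ^ 2 + 1 / σ ^ 2))
    (μhat : EuclideanSpace ℝ (Fin n))
    (hμhat : μhat = shat • ((1 / σ₀ ^ 2) • μ₀ + (1 / σ ^ 2) • w)) :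
    ∫ θ : EuclideanSpace ℝ (Fin n),
        gaussDensity n μ₀ (σ₀ ^ 2) θ *
          Real.log (gaussDensity n μ₀ (σ₀ ^ 2) θ / gaussDensity n μhat shat θ) =
      Real.log (gaussDensity n μ₀ (σ₀ ^ 2 + σ ^ 2) w) -
        ∫ θ : EuclideanSpace ℝ (Fin n),
          gaussDensity n μ₀ (σ₀ ^ 2) θ * Real.log (gaussDensity n θ (σ ^ 2) w) := by
  have hσ₀2 : (0:ℝ) < σ₀ ^ 2 := by positivity
  have hσ2 : (0:ℝ) < σ ^ 2 := by positivity
  have hsum : (0:ℝ) < σ₀ ^ 2 + σ ^ 2 := by positivity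
  have hshat_pos : 0 < shat := by
    rw [hshat]; positivity
  -- pointwise log identity
  have hlog : ∀ θ : EuclideanSpace ℝ (Fin n),
      Real.log (gaussDensity n μ₀ (σ₀ ^ 2) θ / gaussDensity n μhat shat θ) =
        Real.log (gaussDensity n μ₀ (σ₀ ^ 2 + σ ^ 2) w) -
          Real.log (gaussDensity n θ (σ ^ 2) w) := by
    intro θ
    have hb := gauss_bayes n μ₀ w σ₀ σ hσ₀ hσ shat hshat μhat hμhat θ
    have h1 := gaussDensity_pos μ₀ hσ₀2 θ
    have h2 := gaussDensity_pos θ hσ2 w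
    have h3 := gaussDensity_pos μ₀ hsum w
    have h4 := gaussDensity_pos μhat hshat_pos θ
    have hlogeq := congrArg Real.log hb
    rw [Real.log_mul h1.ne' h2.ne', Real.log_mul h3.ne' h4.ne'] at hlogeq
    rw [Real.log_div h1.ne' h4.ne']
    linarith
  have hintegrand : ∀ θ : EuclideanSpace ℝ (Fin n),
      gaussDensity n μ₀ (σ₀ ^ 2) θ *
          Real.log (gaussDensity n μ₀ (σ₀ ^ 2) θ / gaussDensity n μhat shat θ) =
        gaussDensity n μ₀ (σ₀ ^ 2) θ * Real.log (gaussDensity n μ₀ (σ₀ ^ 2 + σ ^ 2) w) -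
          gaussDensity n μ₀ (σ₀ ^ 2) θ * Real.log (gaussDensity n θ (σ ^ 2) w) := by
    intro θ; rw [hlog θ]; ring
  -- integrability facts
  have hint0 : Integrable (gaussDensity n μ₀ (σ₀ ^ 2)) := integrable_gaussDensity μ₀ hσ₀2
  have hint1 : Integrable (fun θ : EuclideanSpace ℝ (Fin n) =>
      gaussDensity n μ₀ (σ₀ ^ 2) θ * Real.log (gaussDensity n μ₀ (σ₀ ^ 2 + σ ^ 2) w)) :=
    hint0.mul_const _
  have hglik_eq : ∀ θ : EuclideanSpace ℝ (Fin n),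
      Real.log (gaussDensity n θ (σ ^ 2) w) =
        Real.log ((2 * π * σ ^ 2) ^ (-(n:ℝ) / 2)) - ‖w - θ‖ ^ 2 / (2 * σ ^ 2) := by
    intro θ
    unfold gaussDensity
    rw [Real.log_mul (by positivity) (Real.exp_ne_zero _), Real.log_exp]
    ring
  have hintsq : Integrable (fun θ : EuclideanSpace ℝ (Fin n) =>
      gaussDensity n μ₀ (σ₀ ^ 2) θ * ‖w - θ‖ ^ 2) := by
    have h := (integrable_sq_mul_gauss (b := 1 / (2 * σ₀ ^ 2)) (by positivity) w μ₀).const_mul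
      ((2 * π * σ₀ ^ 2) ^ (-(n:ℝ) / 2))
    convert h using 2 with θ
    rw [gaussDensity_eq]
    ring
  have hint2 : Integrable (fun θ : EuclideanSpace ℝ (Fin n) =>
      gaussDensity n μ₀ (σ₀ ^ 2) θ * Real.log (gaussDensity n θ (σ ^ 2) w)) := by
    have he : (fun θ : EuclideanSpace ℝ (Fin n) =>
        gaussDensity n μ₀ (σ₀ ^ 2) θ * Real.log (gaussDensity n θ (σ ^ 2) w)) =
        fun θ => gaussDensity n μ₀ (σ₀ ^ 2) θ * Real.log ((2 * π * σ ^ 2) ^ (-(n:ℝ) / 2)) -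
          (1 / (2 * σ ^ 2)) * (gaussDensity n μ₀ (σ₀ ^ 2) θ * ‖w - θ‖ ^ 2) := by
      funext θ
      rw [hglik_eq θ]
      field_simp
    rw [he]
    exact (hint0.mul_const _).sub (hintsq.const_mul _)
  rw [integral_congr_ae (Filter.Eventually.of_forall hintegrand),
      integral_sub hint1 hint2, MeasureTheory.integral_mul_const,
      integral_gaussDensity μ₀ hσ₀2, one_mul]
end

section
/- (Closed form of the NAFI KL penalty for a new global neuron.) For all μ₀, w ∈ ℝⁿ and all σ₀ > 0, σ > 0, letting σ̂² = 1/(1/σ₀² + 1/σ²) and μ̂ = σ̂²·(μ₀/σ₀² + w/σ²), the Kullback–Leibler divergence of the prior N(μ₀, σ₀²·I) from the posterior N(μ̂, σ̂²·I) equals ∫_{ℝⁿ} g(θ; μ₀, σ₀²)·log( g(θ; μ₀, σ₀²) / g(θ; μ̂, σ̂²) ) dθ = (1/2)·[ n·σ₀²/σ² + σ₀²·‖w − μ₀‖²/(σ²·(σ₀² + σ²)) + n·log(σ²/(σ₀² + σ²)) ]; in particular this penalty depends jointly on the global neuron prior mean μ₀ and the local neuron w. -/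
open MeasureTheory
open Real
open scoped RealInnerProductSpace

lemma norm_mes_symm_sq (n : ℕ) (v : Fin n → ℝ) :
    ‖((MeasurableEquiv.toLp 2 (Fin n → ℝ)).symm).symm v‖ ^ 2 = ∑ i, v i ^ 2 := by
  rw [EuclideanSpace.norm_eq, Real.sq_sqrt (by positivity)]
  simp [MeasurableEquiv.toLp_apply]

lemma integrable_exp_euclid (n : ℕ) {b : ℝ} (hb : 0 < b) :
    Integrable (fun x : EuclideanSpace ℝ (Fin n) => Real.exp (-b * ‖x‖ ^ 2)) := by
  have e := (EuclideanSpace.volume_preserving_symm_measurableEquiv_toLp (Fin n)).symm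
  rw [← e.integrable_comp_emb (MeasurableEquiv.measurableEmbedding _)]
  have heq : ((fun x : EuclideanSpace ℝ (Fin n) => Real.exp (-b * ‖x‖ ^ 2)) ∘
      ((MeasurableEquiv.toLp 2 (Fin n → ℝ)).symm).symm)
      = fun v : Fin n → ℝ => ∏ i, Real.exp (-b * v i ^ 2) := by
    funext v
    simp only [Function.comp_apply, norm_mes_symm_sq, Finset.mul_sum, neg_mul,
      ← Finset.sum_neg_distrib, Real.exp_sum]
  rw [heq]
  exact Integrable.fintype_prod (fun i => integrable_exp_neg_mul_sq hb)

lemma integral_exp_euclid (n : ℕ) {b : ℝ} (hb : 0 < b) :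
    ∫ x : EuclideanSpace ℝ (Fin n), Real.exp (-b * ‖x‖ ^ 2) = (π / b) ^ ((n : ℝ) / 2) := by
  have h := GaussianFourier.integral_rexp_neg_mul_sq_norm (V := EuclideanSpace ℝ (Fin n)) hb
  rwa [finrank_euclideanSpace_fin] at h

lemma integrable1d_sq' {b : ℝ} (hb : 0 < b) :
    Integrable (fun x : ℝ => x ^ 2 * Real.exp (-b * x ^ 2)) := by
  have h := integrable_rpow_mul_exp_neg_mul_sq hb (s := 2) (by norm_num)
  refine h.congr (Filter.Eventually.of_forall fun x => ?_)
  simp [Real.rpow_two]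

lemma integral1d_sq {b : ℝ} (hb : 0 < b) :
    ∫ x : ℝ, x ^ 2 * Real.exp (-b * x ^ 2)
      = (1 / (2 * b)) * Real.sqrt (π / b) := by
  have heven : ∀ x : ℝ, (-x) ^ 2 * Real.exp (-b * (-x) ^ 2)
      = x ^ 2 * Real.exp (-b * x ^ 2) := by intro x; ring_nf
  have hIoi : ∫ x in Set.Ioi (0:ℝ), x ^ 2 * Real.exp (-b * x ^ 2)
      = b ^ (-(3/2:ℝ)) * (1/2) * Real.Gamma (3/2) := by
    have h := integral_rpow_mul_exp_neg_mul_rpow (p := 2) (q := 2) (by norm_num) (by norm_num) hb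
    norm_num at h
    simp only [neg_mul] at h ⊢
    rw [← h]
  have hgamma : Real.Gamma (3/2) = Real.sqrt π / 2 := by
    rw [show (3/2 : ℝ) = 1/2 + 1 by norm_num, Real.Gamma_add_one (by norm_num),
      Real.Gamma_one_half_eq]; ring
  have hsplit : ∫ x : ℝ, x ^ 2 * Real.exp (-b * x ^ 2)
      = 2 * ∫ x in Set.Ioi (0:ℝ), x ^ 2 * Real.exp (-b * x ^ 2) := by
    have hint := integrable1d_sq' hb
    rw [← intervalIntegral.integral_Iic_add_Ioi (b := (0:ℝ)) hint.integrableOn hint.integrableOn]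
    have : ∫ x in Set.Iic (0:ℝ), x ^ 2 * Real.exp (-b * x ^ 2)
        = ∫ x in Set.Ioi (0:ℝ), x ^ 2 * Real.exp (-b * x ^ 2) := by
      have h0 : ∫ x in Set.Iic (0:ℝ), x ^ 2 * Real.exp (-b * x ^ 2)
          = ∫ x in Set.Ioi (0:ℝ), (-x) ^ 2 * Real.exp (-b * (-x) ^ 2) := by
        have h1 := integral_comp_neg_Ioi (c := (0:ℝ))
          (f := fun y : ℝ => y ^ 2 * Real.exp (-b * y ^ 2))
        simp only [neg_zero] at h1
        rw [h1]
      rw [h0]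
      exact setIntegral_congr_fun measurableSet_Ioi fun x _ => heven x
    rw [this]; ring
  rw [hsplit, hIoi, hgamma]
  have h2 : b ^ (-(3/2):ℝ) = (b * Real.sqrt b)⁻¹ := by
    rw [Real.rpow_neg hb.le, show (3/2:ℝ) = 1 + 1/2 by norm_num, Real.rpow_add hb,
      Real.rpow_one, Real.sqrt_eq_rpow]
  have h3 : Real.sqrt (π / b) = Real.sqrt π * (Real.sqrt b)⁻¹ := by
    rw [show π / b = π * b⁻¹ by ring, Real.sqrt_mul Real.pi_pos.le, Real.sqrt_inv]
  have hsb : Real.sqrt b ≠ 0 := by positivity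
  rw [h2, h3]
  field_simp

lemma sq_exp_comp_eq (n : ℕ) (b : ℝ) :
    ((fun x : EuclideanSpace ℝ (Fin n) => ‖x‖ ^ 2 * Real.exp (-b * ‖x‖ ^ 2)) ∘
      ((MeasurableEquiv.toLp 2 (Fin n → ℝ)).symm).symm)
      = fun v : Fin n → ℝ => ∑ i, ∏ j,
          (if j = i then (fun t : ℝ => t ^ 2 * Real.exp (-b * t ^ 2))
           else (fun t : ℝ => Real.exp (-b * t ^ 2))) (v j) := by
  funext v
  have hprod : ∀ i : Fin n, (∏ j, (if j = i then (fun t : ℝ => t ^ 2 * Real.exp (-b * t ^ 2))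
      else (fun t : ℝ => Real.exp (-b * t ^ 2))) (v j))
      = v i ^ 2 * ∏ j, Real.exp (-b * v j ^ 2) := by
    intro i
    rw [← Finset.mul_prod_erase Finset.univ _ (Finset.mem_univ i),
      ← Finset.mul_prod_erase Finset.univ (fun j => Real.exp (-b * v j ^ 2)) (Finset.mem_univ i)]
    rw [if_pos rfl, mul_assoc]
    congr 1
    congr 1
    exact Finset.prod_congr rfl fun j hj => by
      rw [if_neg (Finset.ne_of_mem_erase hj)]
  simp only [Function.comp_apply, norm_mes_symm_sq, hprod, ← Finset.sum_mul]
  congr 1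
  simp only [Finset.mul_sum, neg_mul, ← Finset.sum_neg_distrib, Real.exp_sum]

lemma integrable_sq_exp_euclid (n : ℕ) {b : ℝ} (hb : 0 < b) :
    Integrable (fun x : EuclideanSpace ℝ (Fin n) => ‖x‖ ^ 2 * Real.exp (-b * ‖x‖ ^ 2)) := by
  have e := (EuclideanSpace.volume_preserving_symm_measurableEquiv_toLp (Fin n)).symm
  rw [← e.integrable_comp_emb (MeasurableEquiv.measurableEmbedding _), sq_exp_comp_eq]
  refine integrable_finset_sum _ fun i _ => Integrable.fintype_prod fun j => ?_
  by_cases h : j = i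
  · simpa [h] using integrable1d_sq' hb
  · simpa [h] using integrable_exp_neg_mul_sq hb

lemma integral_sq_exp_euclid (n : ℕ) {b : ℝ} (hb : 0 < b) (hn : 1 ≤ n) :
    ∫ x : EuclideanSpace ℝ (Fin n), ‖x‖ ^ 2 * Real.exp (-b * ‖x‖ ^ 2)
      = ((n : ℝ) / (2 * b)) * (π / b) ^ ((n : ℝ) / 2) := by
  have e := (EuclideanSpace.volume_preserving_symm_measurableEquiv_toLp (Fin n)).symm
  rw [← e.integral_comp' (fun x : EuclideanSpace ℝ (Fin n) => ‖x‖ ^ 2 * Real.exp (-b * ‖x‖ ^ 2))]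
  rw [show (fun v => (fun x : EuclideanSpace ℝ (Fin n) => ‖x‖ ^ 2 * Real.exp (-b * ‖x‖ ^ 2))
      (((MeasurableEquiv.toLp 2 (Fin n → ℝ)).symm).symm v)) = ((fun x : EuclideanSpace ℝ (Fin n) =>
      ‖x‖ ^ 2 * Real.exp (-b * ‖x‖ ^ 2)) ∘ ((MeasurableEquiv.toLp 2 (Fin n → ℝ)).symm).symm) from rfl,
    sq_exp_comp_eq]
  rw [integral_finset_sum _ (fun i _ => Integrable.fintype_prod fun j => by
    by_cases h : j = i
    · simpa [h] using integrable1d_sq' hb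
    · simpa [h] using integrable_exp_neg_mul_sq hb)]
  have hterm : ∀ i : Fin n, (∫ v : Fin n → ℝ, ∏ j,
      (if j = i then (fun t : ℝ => t ^ 2 * Real.exp (-b * t ^ 2))
       else (fun t : ℝ => Real.exp (-b * t ^ 2))) (v j))
      = ((1 / (2 * b)) * Real.sqrt (π / b)) * Real.sqrt (π / b) ^ (n - 1) := by
    intro i
    rw [integral_fintype_prod_volume_eq_prod
      (f := fun j => (if j = i then (fun t : ℝ => t ^ 2 * Real.exp (-b * t ^ 2))
       else (fun t : ℝ => Real.exp (-b * t ^ 2))))]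
    rw [← Finset.mul_prod_erase Finset.univ _ (Finset.mem_univ i)]
    rw [if_pos rfl, integral1d_sq hb]
    congr 1
    rw [Finset.prod_congr rfl (fun j hj => by rw [if_neg (Finset.ne_of_mem_erase hj)]),
      Finset.prod_const, integral_gaussian, Finset.card_erase_of_mem (Finset.mem_univ i),
      Finset.card_univ, Fintype.card_fin]
  simp only [hterm, Finset.sum_const, Finset.card_univ, Fintype.card_fin, nsmul_eq_mul]
  have hs : Real.sqrt (π / b) ^ n = (π / b) ^ ((n : ℝ) / 2) := by
    rw [Real.sqrt_eq_rpow, ← Real.rpow_natCast ((π / b) ^ ((1:ℝ)/2)) n, ← Real.rpow_mul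
      (by positivity)]
    congr 1
    ring
  rw [← hs, show Real.sqrt (π / b) ^ n = Real.sqrt (π / b) * Real.sqrt (π / b) ^ (n - 1) by
    rw [← pow_succ', Nat.sub_add_cancel hn]]
  ring

lemma integrable_inner_exp_euclid (n : ℕ) {b : ℝ} (hb : 0 < b) (d : EuclideanSpace ℝ (Fin n)) :
    Integrable (fun x : EuclideanSpace ℝ (Fin n) => ⟪x, d⟫ * Real.exp (-b * ‖x‖ ^ 2)) := by
  have hcont : Continuous (fun x : EuclideanSpace ℝ (Fin n) => ⟪x, d⟫ * Real.exp (-b * ‖x‖ ^ 2)) := by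
    exact (continuous_id.inner continuous_const).mul
      (Real.continuous_exp.comp (continuous_const.mul (continuous_norm.pow 2)))
  refine Integrable.mono' (((integrable_exp_euclid n hb).add
    (integrable_sq_exp_euclid n hb)).const_mul ‖d‖) hcont.aestronglyMeasurable
    (Filter.Eventually.of_forall fun x => ?_)
  have h1 : |⟪x, d⟫| ≤ ‖x‖ * ‖d‖ := abs_real_inner_le_norm x d
  have h2 : ‖x‖ ≤ 1 + ‖x‖ ^ 2 := by nlinarith [norm_nonneg x, sq_nonneg (‖x‖ - 1)]
  have he : 0 < Real.exp (-b * ‖x‖ ^ 2) := Real.exp_pos _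
  have hd : (0:ℝ) ≤ ‖d‖ := norm_nonneg d
  rw [Real.norm_eq_abs, abs_mul, abs_of_pos he]
  calc |⟪x, d⟫| * Real.exp (-b * ‖x‖ ^ 2) ≤ (‖x‖ * ‖d‖) * Real.exp (-b * ‖x‖ ^ 2) :=
        mul_le_mul_of_nonneg_right h1 he.le
    _ ≤ ((1 + ‖x‖ ^ 2) * ‖d‖) * Real.exp (-b * ‖x‖ ^ 2) :=
        mul_le_mul_of_nonneg_right (mul_le_mul_of_nonneg_right h2 hd) he.le
    _ = ‖d‖ * (Real.exp (-b * ‖x‖ ^ 2) + ‖x‖ ^ 2 * Real.exp (-b * ‖x‖ ^ 2)) := by ring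

lemma integral_inner_exp_euclid (n : ℕ) (b : ℝ) (d : EuclideanSpace ℝ (Fin n)) :
    ∫ x : EuclideanSpace ℝ (Fin n), ⟪x, d⟫ * Real.exp (-b * ‖x‖ ^ 2) = 0 := by
  have h := integral_neg_eq_self
    (fun x : EuclideanSpace ℝ (Fin n) => ⟪x, d⟫ * Real.exp (-b * ‖x‖ ^ 2)) volume
  simp only [inner_neg_left, norm_neg, neg_mul] at h
  rw [integral_neg] at h
  simp only [neg_mul]
  linarith [h]

/-- Closed form of the NAFI KL penalty for a new global neuron: KL divergence of the prior
`N(μ₀, σ₀²·I)` from the posterior `N(μhat, shat·I)` after assigning the local neuron `w`;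
it depends jointly on `μ₀` and `w`. -/
theorem nafi_kl_penalty_new_neuron
    (n : ℕ) (hn : 1 ≤ n)
    (μ₀ w : EuclideanSpace ℝ (Fin n)) (σ₀ σ : ℝ) (hσ₀ : 0 < σ₀) (hσ : 0 < σ)
    (shat : ℝ) (hshat : shat = 1 / (1 / σ₀ ^ 2 + 1 / σ ^ 2))
    (μhat : EuclideanSpace ℝ (Fin n))
    (hμhat : μhat = shat • ((1 / σ₀ ^ 2) • μ₀ + (1 / σ ^ 2) • w)) :
    ∫ θ : EuclideanSpace ℝ (Fin n),
        gaussDensity n μ₀ (σ₀ ^ 2) θ *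
          Real.log (gaussDensity n μ₀ (σ₀ ^ 2) θ / gaussDensity n μhat shat θ) =
      (1 / 2) * ((n : ℝ) * σ₀ ^ 2 / σ ^ 2 +
        σ₀ ^ 2 * ‖w - μ₀‖ ^ 2 / (σ ^ 2 * (σ₀ ^ 2 + σ ^ 2)) +
        (n : ℝ) * Real.log (σ ^ 2 / (σ₀ ^ 2 + σ ^ 2))) := by
  have hs0 : (0:ℝ) < σ₀ ^ 2 := by positivity
  have hs : (0:ℝ) < σ ^ 2 := by positivity
  have hsum : (0:ℝ) < σ₀ ^ 2 + σ ^ 2 := by positivity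
  have hshat' : shat = σ₀ ^ 2 * σ ^ 2 / (σ₀ ^ 2 + σ ^ 2) := by
    rw [hshat]; field_simp; ring
  have hshat0 : 0 < shat := by rw [hshat']; positivity
  set b₀ : ℝ := 1 / (2 * σ₀ ^ 2) with hb₀def
  have hb₀ : 0 < b₀ := by positivity
  set c₀ : ℝ := (2 * Real.pi * σ₀ ^ 2) ^ (-(n : ℝ) / 2) with hc₀def
  set c₁ : ℝ := (2 * Real.pi * shat) ^ (-(n : ℝ) / 2) with hc₁def
  have hbase0 : (0:ℝ) < 2 * Real.pi * σ₀ ^ 2 := by positivity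
  have hbase1 : (0:ℝ) < 2 * Real.pi * shat := by positivity
  have hc₀pos : 0 < c₀ := Real.rpow_pos_of_pos hbase0 _
  have hc₁pos : 0 < c₁ := Real.rpow_pos_of_pos hbase1 _
  set K : ℝ := Real.log c₀ - Real.log c₁ with hKdef
  set d : EuclideanSpace ℝ (Fin n) := μ₀ - μhat with hddef
  set G : EuclideanSpace ℝ (Fin n) → ℝ := fun u =>
    (c₀ * (K + ‖d‖ ^ 2 / (2 * shat))) * Real.exp (-b₀ * ‖u‖ ^ 2)
    + (c₀ * (1 / (2 * shat) - 1 / (2 * σ₀ ^ 2))) * (‖u‖ ^ 2 * Real.exp (-b₀ * ‖u‖ ^ 2))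
    + (c₀ / shat) * (⟪u, d⟫ * Real.exp (-b₀ * ‖u‖ ^ 2)) with hGdef
  -- Step 1: pointwise identity
  have hpt : (fun θ : EuclideanSpace ℝ (Fin n) =>
      gaussDensity n μ₀ (σ₀ ^ 2) θ *
        Real.log (gaussDensity n μ₀ (σ₀ ^ 2) θ / gaussDensity n μhat shat θ))
      = fun θ => G (θ - μ₀) := by
    funext θ
    have hnorm : ‖θ - μhat‖ ^ 2 = ‖θ - μ₀‖ ^ 2 + 2 * ⟪θ - μ₀, d⟫ + ‖d‖ ^ 2 := by
      have : θ - μhat = (θ - μ₀) + d := by rw [hddef]; abel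
      rw [this, norm_add_sq_real]
    have he0 : Real.exp (-‖θ - μ₀‖ ^ 2 / (2 * σ₀ ^ 2)) ≠ 0 := Real.exp_ne_zero _
    have he1 : Real.exp (-‖θ - μhat‖ ^ 2 / (2 * shat)) ≠ 0 := Real.exp_ne_zero _
    have hlog : Real.log (gaussDensity n μ₀ (σ₀ ^ 2) θ / gaussDensity n μhat shat θ)
        = (Real.log c₀ + (-‖θ - μ₀‖ ^ 2 / (2 * σ₀ ^ 2)))
          - (Real.log c₁ + (-‖θ - μhat‖ ^ 2 / (2 * shat))) := by
      unfold gaussDensity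
      rw [← hc₀def, ← hc₁def]
      rw [Real.log_div (by positivity) (by positivity), Real.log_mul hc₀pos.ne' he0,
        Real.log_mul hc₁pos.ne' he1, Real.log_exp, Real.log_exp]
    rw [hlog]
    show gaussDensity n μ₀ (σ₀ ^ 2) θ * _ = G (θ - μ₀)
    unfold gaussDensity
    rw [← hc₀def, hGdef]
    simp only []
    rw [hnorm]
    rw [hKdef, hb₀def]
    rw [show -‖θ - μ₀‖ ^ 2 / (2 * σ₀ ^ 2) = -(1 / (2 * σ₀ ^ 2)) * ‖θ - μ₀‖ ^ 2 by ring]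
    generalize (⟪θ - μ₀, d⟫ : ℝ) = B
    generalize Real.exp (-(1 / (2 * σ₀ ^ 2)) * ‖θ - μ₀‖ ^ 2) = E0
    generalize ‖θ - μ₀‖ ^ 2 = A
    generalize ‖d‖ ^ 2 = Dn
    field_simp
    ring
  rw [hpt, integral_sub_right_eq_self G μ₀]
  -- Step 2: compute the integral of G
  have hIf := integral_exp_euclid n hb₀
  have hIg := integral_sq_exp_euclid n hb₀ hn
  have hIh := integral_inner_exp_euclid n b₀ d
  have hint1 : Integrable (fun u : EuclideanSpace ℝ (Fin n) =>
      (c₀ * (K + ‖d‖ ^ 2 / (2 * shat))) * Real.exp (-b₀ * ‖u‖ ^ 2)) :=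
    (integrable_exp_euclid n hb₀).const_mul _
  have hint2 : Integrable (fun u : EuclideanSpace ℝ (Fin n) =>
      (c₀ * (1 / (2 * shat) - 1 / (2 * σ₀ ^ 2))) * (‖u‖ ^ 2 * Real.exp (-b₀ * ‖u‖ ^ 2))) :=
    (integrable_sq_exp_euclid n hb₀).const_mul _
  have hint3 : Integrable (fun u : EuclideanSpace ℝ (Fin n) =>
      (c₀ / shat) * (⟪u, d⟫ * Real.exp (-b₀ * ‖u‖ ^ 2))) :=
    (integrable_inner_exp_euclid n hb₀ d).const_mul _
  have hint12 : Integrable (fun u : EuclideanSpace ℝ (Fin n) =>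
      (c₀ * (K + ‖d‖ ^ 2 / (2 * shat))) * Real.exp (-b₀ * ‖u‖ ^ 2)
      + (c₀ * (1 / (2 * shat) - 1 / (2 * σ₀ ^ 2))) * (‖u‖ ^ 2 * Real.exp (-b₀ * ‖u‖ ^ 2)))
      volume := hint1.add hint2
  simp only [hGdef]
  rw [integral_add hint12 hint3, integral_add hint1 hint2,
    integral_const_mul, integral_const_mul, integral_const_mul, hIf, hIg, hIh]
  -- Step 3: algebra
  have hpib : Real.pi / b₀ = 2 * Real.pi * σ₀ ^ 2 := by
    rw [hb₀def]; field_simp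
  have hc₀I : c₀ * (Real.pi / b₀) ^ ((n : ℝ) / 2) = 1 := by
    rw [hpib, hc₀def, ← Real.rpow_add hbase0, show -(n:ℝ)/2 + (n:ℝ)/2 = 0 by ring,
      Real.rpow_zero]
  have hnb : (n : ℝ) / (2 * b₀) = (n : ℝ) * σ₀ ^ 2 := by
    rw [hb₀def]; field_simp
  have hKval : K = ((n : ℝ) / 2) * Real.log (σ ^ 2 / (σ₀ ^ 2 + σ ^ 2)) := by
    rw [hKdef, hc₀def, hc₁def, Real.log_rpow hbase0, Real.log_rpow hbase1]
    have hratio : σ ^ 2 / (σ₀ ^ 2 + σ ^ 2) = (2 * Real.pi * shat) / (2 * Real.pi * σ₀ ^ 2) := by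
      rw [hshat']; field_simp
    rw [hratio, Real.log_div hbase1.ne' hbase0.ne']
    ring
  have hdval : d = (shat / σ ^ 2) • (μ₀ - w) := by
    have hc : shat * (1 / σ₀ ^ 2) = 1 - shat / σ ^ 2 := by
      rw [hshat']; field_simp; ring
    rw [hddef, hμhat, smul_add, smul_smul, smul_smul, hc,
      show shat * (1 / σ ^ 2) = shat / σ ^ 2 by ring, sub_smul, one_smul, smul_sub]
    abel
  have hdnorm : ‖d‖ ^ 2 = (shat / σ ^ 2) ^ 2 * ‖w - μ₀‖ ^ 2 := by
    rw [hdval, norm_smul, mul_pow, ← norm_sub_rev]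
    congr 1
    rw [Real.norm_eq_abs, sq_abs]
  -- Collect
  rw [hdnorm, hKval, hnb]
  rw [show c₀ * (((n:ℝ)/2) * Real.log (σ ^ 2 / (σ₀ ^ 2 + σ ^ 2))
      + (shat / σ ^ 2) ^ 2 * ‖w - μ₀‖ ^ 2 / (2 * shat)) * (Real.pi / b₀) ^ ((n : ℝ) / 2)
      = (((n:ℝ)/2) * Real.log (σ ^ 2 / (σ₀ ^ 2 + σ ^ 2))
      + (shat / σ ^ 2) ^ 2 * ‖w - μ₀‖ ^ 2 / (2 * shat)) * (c₀ * (Real.pi / b₀) ^ ((n : ℝ) / 2))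
      by ring, hc₀I,
    show c₀ * (1 / (2 * shat) - 1 / (2 * σ₀ ^ 2)) * ((n:ℝ) * σ₀ ^ 2 * (Real.pi / b₀) ^ ((n : ℝ) / 2))
      = (1 / (2 * shat) - 1 / (2 * σ₀ ^ 2)) * ((n:ℝ) * σ₀ ^ 2) * (c₀ * (Real.pi / b₀) ^ ((n : ℝ) / 2))
      by ring, hc₀I]
  rw [hshat']
  have hT : (0:ℝ) ≤ ‖w - μ₀‖ ^ 2 := sq_nonneg _
  field_simp
  ring
end
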